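/- arXiv:2107.01916 — 2 statements merged into one kernel-verified Lean document; each statement's English description precedes it below -/
import Mathlib

section
/- Transformation of the inverse square root under congruence (Theorem 2.1 of Ilmonen–Oja–Serfling, as used in the paper). Let M be a symmetric positive definite real p×p matrix and let B be an invertible real p×p matrix. Then there exists a unique orthogonal p×p matrix V such that (B M Bᵀ)^{-1/2} = V M^{-1/2} B⁻¹. -/
open Matrix

/-- A signed permutation matrix: exactly one nonzero entry in each row and each
column, each such entry being `1` or `-1`. -/
def IsSignedPerm {p : ℕ} (Q : Matrix (Fin p) (Fin p) ℝ) : Prop :=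
  (∀ i, ∃! j, Q i j ≠ 0) ∧ (∀ j, ∃! i, Q i j ≠ 0) ∧
  (∀ i j, Q i j ≠ 0 → Q i j = 1 ∨ Q i j = -1)

/-- A generalized permutation matrix: exactly one nonzero entry in each row and
each column. -/
def IsGenPerm {p : ℕ} (Q : Matrix (Fin p) (Fin p) ℝ) : Prop :=
  (∀ i, ∃! j, Q i j ≠ 0) ∧ (∀ j, ∃! i, Q i j ≠ 0)

open scoped Classical in
/-- For a symmetric positive (semi)definite matrix `M`, `invSqrt M` is the inverse
of its unique positive semidefinite square root, i.e. `M^{-1/2}`. -/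
noncomputable def invSqrt {p : ℕ} (M : Matrix (Fin p) (Fin p) ℝ) : Matrix (Fin p) (Fin p) ℝ :=
  if h : M.PosSemidef then
    ((h.1.eigenvectorUnitary : Matrix (Fin p) (Fin p) ℝ) *
      diagonal (Real.sqrt ∘ h.1.eigenvalues) *
      (star h.1.eigenvectorUnitary : Matrix (Fin p) (Fin p) ℝ))⁻¹ else 0

open scoped Classical in
noncomputable def Matrix.PosSemidef.sqrt {p : ℕ} {M : Matrix (Fin p) (Fin p) ℝ} (h : M.PosSemidef) :
    Matrix (Fin p) (Fin p) ℝ :=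
  (h.1.eigenvectorUnitary : Matrix (Fin p) (Fin p) ℝ) *
      diagonal (Real.sqrt ∘ h.1.eigenvalues) *
      (star h.1.eigenvectorUnitary : Matrix (Fin p) (Fin p) ℝ)

lemma Matrix.PosSemidef.sqrt_isHermitian {p : ℕ} {M : Matrix (Fin p) (Fin p) ℝ} (h : M.PosSemidef) :
    h.sqrt.IsHermitian := by
  unfold Matrix.PosSemidef.sqrt
  rw [Matrix.IsHermitian, star_eq_conjTranspose, conjTranspose_mul, conjTranspose_mul,
    conjTranspose_conjTranspose, diagonal_conjTranspose, star_trivial, Matrix.mul_assoc]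

lemma Matrix.PosSemidef.sqrt_mul_self {p : ℕ} {M : Matrix (Fin p) (Fin p) ℝ} (h : M.PosSemidef) :
    h.sqrt * h.sqrt = M := by
  unfold Matrix.PosSemidef.sqrt
  have hU := Unitary.coe_star_mul_self h.1.eigenvectorUnitary
  calc _ = (h.1.eigenvectorUnitary : Matrix (Fin p) (Fin p) ℝ) *
      (diagonal (Real.sqrt ∘ h.1.eigenvalues) * ((star h.1.eigenvectorUnitary : Matrix (Fin p) (Fin p) ℝ) * (h.1.eigenvectorUnitary : Matrix (Fin p) (Fin p) ℝ)) *
      diagonal (Real.sqrt ∘ h.1.eigenvalues)) *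
      (star h.1.eigenvectorUnitary : Matrix (Fin p) (Fin p) ℝ) := by simp only [Matrix.mul_assoc]
    _ = (h.1.eigenvectorUnitary : Matrix (Fin p) (Fin p) ℝ) * diagonal h.1.eigenvalues *
      (star h.1.eigenvectorUnitary : Matrix (Fin p) (Fin p) ℝ) := by
        rw [hU, Matrix.mul_one, diagonal_mul_diagonal]
        congr 3
        funext i
        exact Real.mul_self_sqrt (h.eigenvalues_nonneg i)
    _ = M := by
        conv_rhs => rw [h.1.spectral_theorem]
        simp [Unitary.conjStarAlgAut_apply]

lemma Matrix.PosSemidef.sq_sqrt {p : ℕ} {M : Matrix (Fin p) (Fin p) ℝ} (h : M.PosSemidef) :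
    h.sqrt ^ 2 = M := by rw [pow_two, h.sqrt_mul_self]

lemma posDef_congr {p : ℕ} (M B : Matrix (Fin p) (Fin p) ℝ)
    (hM : M.PosDef) (hB : IsUnit B) : (B * M * Bᵀ).PosDef := by
  have := hM.mul_mul_conjTranspose_same (B := B) (vecMul_injective_of_isUnit hB)
  rwa [conjTranspose_eq_transpose_of_trivial] at this

lemma sqrt_isUnit {p : ℕ} {A : Matrix (Fin p) (Fin p) ℝ} (hA : A.PosDef) :
    IsUnit hA.posSemidef.sqrt.det := by
  have h : hA.posSemidef.sqrt ^ 2 = A := hA.posSemidef.sq_sqrt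
  have : hA.posSemidef.sqrt.det ^ 2 = A.det := by rw [← Matrix.det_pow, h]
  have hd := hA.det_pos
  refine isUnit_iff_ne_zero.mpr fun h0 => ?_
  rw [h0] at this; simp at this; rw [← this] at hd; simp at hd


/-- Transformation of the inverse square root under congruence
(Theorem 2.1 of Ilmonen–Oja–Serfling). -/
theorem invSqrt_congruence {p : ℕ}
    (M B : Matrix (Fin p) (Fin p) ℝ)
    (hM : M.PosDef) (hB : IsUnit B) :
    ∃! V : Matrix (Fin p) (Fin p) ℝ,
      V * Vᵀ = 1 ∧ invSqrt (B * M * Bᵀ) = V * invSqrt M * B⁻¹ := by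
  have hN : (B * M * Bᵀ).PosDef := posDef_congr M B hM hB
  set S := hM.posSemidef.sqrt with hSdef
  set T := hN.posSemidef.sqrt with hTdef
  have hS : IsUnit S.det := sqrt_isUnit hM
  have hT : IsUnit T.det := sqrt_isUnit hN
  have hBd : IsUnit B.det := (Matrix.isUnit_iff_isUnit_det _).mp hB
  have hSt : Sᵀ = S := by
    have := hM.posSemidef.sqrt_isHermitian
    rwa [Matrix.IsHermitian, conjTranspose_eq_transpose_of_trivial] at this
  have hTt : Tᵀ = T := by
    have := hN.posSemidef.sqrt_isHermitian
    rwa [Matrix.IsHermitian, conjTranspose_eq_transpose_of_trivial] at this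
  have hSS : S * S = M := hM.posSemidef.sqrt_mul_self
  have hTT : T * T = B * M * Bᵀ := hN.posSemidef.sqrt_mul_self
  have hiN : invSqrt (B * M * Bᵀ) = T⁻¹ := by rw [invSqrt, dif_pos hN.posSemidef]; rfl
  have hiM : invSqrt M = S⁻¹ := by rw [invSqrt, dif_pos hM.posSemidef]; rfl
  refine ⟨T⁻¹ * B * S, ⟨?_, ?_⟩, ?_⟩
  · rw [Matrix.transpose_mul, Matrix.transpose_mul, hSt, Matrix.transpose_nonsing_inv, hTt]
    calc T⁻¹ * B * S * (S * (Bᵀ * T⁻¹)) = T⁻¹ * (B * (S * S) * Bᵀ) * T⁻¹ := by simp only [Matrix.mul_assoc]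
      _ = T⁻¹ * (T * T) * T⁻¹ := by rw [hSS, hTT]
      _ = T⁻¹ * T * (T * T⁻¹) := by rw [Matrix.mul_assoc, Matrix.mul_assoc, Matrix.mul_assoc]
      _ = 1 := by rw [Matrix.nonsing_inv_mul _ hT, Matrix.mul_nonsing_inv _ hT, one_mul]
  · rw [hiN, hiM, Matrix.mul_assoc, Matrix.mul_assoc, ← Matrix.mul_assoc S,
      Matrix.mul_nonsing_inv _ hS, Matrix.one_mul, Matrix.mul_assoc, Matrix.mul_nonsing_inv _ hBd, Matrix.mul_one]
  · rintro W ⟨-, hW2⟩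
    rw [hiN, hiM] at hW2
    have : T⁻¹ * B * S = W * S⁻¹ * B⁻¹ * B * S := by rw [← hW2]
    rw [this, Matrix.mul_assoc (W * S⁻¹), Matrix.nonsing_inv_mul _ hBd, Matrix.mul_one,
      Matrix.mul_assoc, Matrix.nonsing_inv_mul _ hS, Matrix.mul_one]
end

section
/- A maximizer of the joint-diagonalization objective diagonalizes exactly when exact joint diagonalization is possible. Let M₁,…,M_K be symmetric real p×p matrices, and suppose there exists an orthogonal matrix U₀ such that U₀ M_k U₀ᵀ is diagonal for every k. If U is an orthogonal matrix maximizing the objective U' ↦ Σ_{k=1}^K ‖diag(U' M_k U'ᵀ)‖_F² over all orthogonal p×p matrices U' (i.e., Σ_k ‖diag(U' M_k U'ᵀ)‖_F² ≤ Σ_k ‖diag(U M_k Uᵀ)‖_F² for all orthogonal U'), then U M_k Uᵀ is diagonal for every k = 1,…,K. -/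
open Matrix

/-!
Orthogonal conjugation preserves the total sum of squared entries of each `M k`, and this
total dominates the sum of squared diagonal entries, with equality exactly for diagonal
matrices. Conjugating by `U₀` attains the total for every `k`, so a maximizer `U` attains
it as well, which forces every `U * M k * Uᵀ` to be diagonal.
-/

namespace Matrix

variable {n ι R : Type*} [Fintype n] [Fintype ι]

theorem sum_sum_sq_eq_trace_mul_transpose [Semiring R] (A : Matrix n n R) :
    ∑ i, ∑ j, A i j ^ 2 = trace (A * Aᵀ) := by
  simp [trace, mul_apply, sq]

theorem IsDiag.sum_sq_diag_eq [Semiring R] {A : Matrix n n R} (hA : A.IsDiag) :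
    ∑ i, A i i ^ 2 = ∑ i, ∑ j, A i j ^ 2 := by
  refine Finset.sum_congr rfl fun i _ => ?_
  rw [Finset.sum_eq_single_of_mem i (Finset.mem_univ i) fun j _ hji => by
    rw [hA hji.symm, sq, zero_mul]]

theorem sum_sum_sq_conj_orthogonal [CommRing R] [DecidableEq n] {V : Matrix n n R}
    (hV : V * Vᵀ = 1) (A : Matrix n n R) :
    ∑ i, ∑ j, (V * A * Vᵀ) i j ^ 2 = ∑ i, ∑ j, A i j ^ 2 := by
  have hV' : Vᵀ * V = 1 := mul_eq_one_comm.mp hV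
  have hconj : (V * A * Vᵀ) * (V * A * Vᵀ)ᵀ = V * (A * Aᵀ) * Vᵀ := by
    simp only [transpose_mul, transpose_transpose, Matrix.mul_assoc]
    rw [← Matrix.mul_assoc Vᵀ V, hV', Matrix.one_mul]
  rw [sum_sum_sq_eq_trace_mul_transpose, sum_sum_sq_eq_trace_mul_transpose, hconj,
    trace_mul_cycle, ← Matrix.mul_assoc, hV', Matrix.one_mul]

variable [CommRing R] [LinearOrder R] [IsStrictOrderedRing R]

theorem sq_diag_le_sum_sq_row (A : Matrix n n R) (i : n) :
    A i i ^ 2 ≤ ∑ j, A i j ^ 2 :=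
  Finset.single_le_sum (f := fun j => A i j ^ 2) (fun _ _ => sq_nonneg _) (Finset.mem_univ i)

theorem sum_sq_diag_le_sum_sum_sq (A : Matrix n n R) :
    ∑ i, A i i ^ 2 ≤ ∑ i, ∑ j, A i j ^ 2 :=
  Finset.sum_le_sum fun i _ => sq_diag_le_sum_sq_row A i

theorem isDiag_of_sum_sum_sq_le_sum_sq_diag {A : Matrix n n R}
    (hA : ∑ i, ∑ j, A i j ^ 2 ≤ ∑ i, A i i ^ 2) : A.IsDiag := by
  classical
  intro i j hij
  have hrows : ∀ i ∈ Finset.univ, A i i ^ 2 = ∑ j, A i j ^ 2 :=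
    (Finset.sum_eq_sum_iff_of_le fun i _ => sq_diag_le_sum_sq_row A i).mp
      (le_antisymm (sum_sq_diag_le_sum_sum_sq A) hA)
  have hoff : ∑ j ∈ Finset.univ.erase i, A i j ^ 2 = 0 := by
    have h := hrows i (Finset.mem_univ i)
    rw [← Finset.add_sum_erase _ _ (Finset.mem_univ i)] at h
    linarith
  have hj : A i j ^ 2 = 0 :=
    (Finset.sum_eq_zero_iff_of_nonneg fun j _ => sq_nonneg (A i j)).mp hoff j
      (Finset.mem_erase.mpr ⟨hij.symm, Finset.mem_univ j⟩)
  exact pow_eq_zero_iff two_ne_zero |>.mp hj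

theorem isDiag_of_sum_sum_sum_sq_le_sum_sum_sq_diag {A : ι → Matrix n n R}
    (hA : ∑ k, ∑ i, ∑ j, A k i j ^ 2 ≤ ∑ k, ∑ i, A k i i ^ 2) (k : ι) : (A k).IsDiag := by
  have hterms : ∀ k ∈ Finset.univ, ∑ i, A k i i ^ 2 = ∑ i, ∑ j, A k i j ^ 2 :=
    (Finset.sum_eq_sum_iff_of_le fun k _ => sum_sq_diag_le_sum_sum_sq (A k)).mp
      (le_antisymm (Finset.sum_le_sum fun k _ => sum_sq_diag_le_sum_sum_sq (A k)) hA)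
  exact isDiag_of_sum_sum_sq_le_sum_sq_diag (hterms k (Finset.mem_univ k)).ge

end Matrix

theorem maximizer_diagonalizes_general {p K : ℕ}
    (M : Fin K → Matrix (Fin p) (Fin p) ℝ)
    (U₀ : Matrix (Fin p) (Fin p) ℝ) (hU₀ : U₀ * U₀ᵀ = 1)
    (hU₀diag : ∀ k, (U₀ * M k * U₀ᵀ).IsDiag)
    (U : Matrix (Fin p) (Fin p) ℝ) (hU : U * Uᵀ = 1)
    (hmax : ∀ U' : Matrix (Fin p) (Fin p) ℝ, U' * U'ᵀ = 1 →
      ∑ k, ∑ i, ((U' * M k * U'ᵀ) i i) ^ 2 ≤ ∑ k, ∑ i, ((U * M k * Uᵀ) i i) ^ 2) :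
    ∀ k, (U * M k * Uᵀ).IsDiag := by
  have htotal : ∀ k, ∑ i, ∑ j, (U * M k * Uᵀ) i j ^ 2 = ∑ i, (U₀ * M k * U₀ᵀ) i i ^ 2 := by
    intro k
    rw [sum_sum_sq_conj_orthogonal hU, (hU₀diag k).sum_sq_diag_eq,
      sum_sum_sq_conj_orthogonal hU₀]
  refine isDiag_of_sum_sum_sum_sq_le_sum_sum_sq_diag (A := fun k => U * M k * Uᵀ) ?_
  calc ∑ k, ∑ i, ∑ j, (U * M k * Uᵀ) i j ^ 2
      = ∑ k, ∑ i, (U₀ * M k * U₀ᵀ) i i ^ 2 := Finset.sum_congr rfl fun k _ => htotal k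
    _ ≤ ∑ k, ∑ i, (U * M k * Uᵀ) i i ^ 2 := hmax U₀ hU₀

/-- A maximizer of the joint-diagonalization objective diagonalizes exactly
when exact joint diagonalization is possible. -/
theorem maximizer_diagonalizes {p K : ℕ}
    (M : Fin K → Matrix (Fin p) (Fin p) ℝ)
    (hsym : ∀ k, (M k).IsSymm)
    (U₀ : Matrix (Fin p) (Fin p) ℝ) (hU₀ : U₀ * U₀ᵀ = 1)
    (hU₀diag : ∀ k, (U₀ * M k * U₀ᵀ).IsDiag)
    (U : Matrix (Fin p) (Fin p) ℝ) (hU : U * Uᵀ = 1)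
    (hmax : ∀ U' : Matrix (Fin p) (Fin p) ℝ, U' * U'ᵀ = 1 →
      ∑ k, ∑ i, ((U' * M k * U'ᵀ) i i) ^ 2 ≤ ∑ k, ∑ i, ((U * M k * Uᵀ) i i) ^ 2) :
    ∀ k, (U * M k * Uᵀ).IsDiag :=
  maximizer_diagonalizes_general M U₀ hU₀ hU₀diag U hU hmax
end
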